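/- If t : ℝⁿ → ℝⁿ is C¹ with symmetric Jacobian, then the Hessian of F(x) = Σᵢ ∫_0^{x_i} t_i(x_1,…,x_{i-1}, s, 0,…,0) ds equals the Jacobian of t: (HF(x))_{ab} = ∂t_a/∂x_b(x). -/

import Mathlib

/-!
Substituting `s = u yᵢ` gives `F y = ∑ᵢ ∫₀¹ yᵢ tᵢ(P_{i,u} y) du` with
`P_{i,u} y = (y₁, …, y_{i-1}, u yᵢ, 0, …, 0)` linear in `y`, so `F` can be differentiated under
the integral sign at every `y` whose path points all lie in `U`, an open set containing the
orthant. In `∂_a F (y)` the terms `i < a` vanish, the term `i = a` is `∫₀¹ d/du [u t_a(P_{a,u} y)]`,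
and, by symmetry of the Jacobian, each term `i > a` is `∫₀¹ d/du t_a(P_{i,u} y)`. These telescope
to `t_a(y)`, so `∇F = t` near the orthant and the Hessian of `F` is the Jacobian of `t`.
-/

open MeasureTheory

/-- The segmented-path potential: F(x) = ∑ i, ∫_0^{x i} t_i(x_1,…,x_{i-1}, s, 0,…,0) ds. -/
noncomputable def segPotential {n : ℕ} (t : (Fin n → ℝ) → (Fin n → ℝ)) (x : Fin n → ℝ) : ℝ :=
  ∑ i : Fin n, ∫ s in (0:ℝ)..(x i),
    t (fun j => if j < i then x j else if j = i then s else 0) i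

open Set Filter Topology intervalIntegral
open scoped Interval

theorem hasFDerivAt_intervalIntegral_of_continuousOn
    {E G : Type*} [NormedAddCommGroup E] [NormedSpace ℝ E] [LocallyCompactSpace E]
    [NormedAddCommGroup G] [NormedSpace ℝ G]
    {f : E → ℝ → G} {f' : E → ℝ → E →L[ℝ] G} {s : Set E} {y : E} {a b : ℝ}
    (hs : IsOpen s) (hy : y ∈ s) (hf : ∀ z ∈ s, ContinuousOn (f z) [[a, b]])
    (hf' : ContinuousOn (Function.uncurry f') (s ×ˢ [[a, b]]))
    (hderiv : ∀ z ∈ s, ∀ u ∈ [[a, b]], HasFDerivAt (f · u) (f' z u) z) :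
    HasFDerivAt (fun z => ∫ u in a..b, f z u) (∫ u in a..b, f' y u) y := by
  obtain ⟨K, hKy, hKs, hK⟩ := local_compact_nhds (hs.mem_nhds hy)
  obtain ⟨M, hM⟩ := (hK.prod isCompact_uIcc).exists_bound_of_continuousOn
    (hf'.mono (prod_mono hKs le_rfl))
  refine hasFDerivAt_integral_of_dominated_of_fderiv_le (bound := fun _ => M) hKy ?_
    (hf y hy).intervalIntegrable ?_ ?_ intervalIntegrable_const ?_
  · filter_upwards [hs.mem_nhds hy] with z hz
    exact ((hf z hz).mono uIoc_subset_uIcc).aestronglyMeasurable measurableSet_uIoc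
  · have : ContinuousOn (f' y) [[a, b]] :=
      hf'.comp (Continuous.prodMk_right y).continuousOn fun u hu => ⟨hy, hu⟩
    exact (this.mono uIoc_subset_uIcc).aestronglyMeasurable measurableSet_uIoc
  · exact ae_of_all _ fun u hu z hz => hM (z, u) ⟨hz, uIoc_subset_uIcc hu⟩
  · exact ae_of_all _ fun u hu z hz => hderiv z (hKs hz) u (uIoc_subset_uIcc hu)

namespace SegmentedPath

variable {n : ℕ} {U : Set (Fin n → ℝ)} {g : (Fin n → ℝ) → ℝ} {t : (Fin n → ℝ) → (Fin n → ℝ)}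

noncomputable def lowerProj (k : ℕ) : (Fin n → ℝ) →L[ℝ] (Fin n → ℝ) :=
  ContinuousLinearMap.pi fun j => if (j : ℕ) < k then ContinuousLinearMap.proj j else 0

/-- `segPath i u y = (y₁, …, y_{i-1}, u yᵢ, 0, …, 0)`; for `u ∈ [0, 1]` this runs along the
`i`-th segment of the coordinatewise path from `0` to `y`. -/
noncomputable def segPath (i : Fin n) (u : ℝ) : (Fin n → ℝ) →L[ℝ] (Fin n → ℝ) :=
  lowerProj i + u • (ContinuousLinearMap.single ℝ (fun _ => ℝ) i).comp (ContinuousLinearMap.proj i)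

theorem lowerProj_apply (k : ℕ) (y : Fin n → ℝ) (j : Fin n) :
    lowerProj k y j = if (j : ℕ) < k then y j else 0 := by
  by_cases h : (j : ℕ) < k <;> simp [lowerProj, h]

theorem lowerProj_of_le {k : ℕ} (hk : n ≤ k) (y : Fin n → ℝ) : lowerProj k y = y := by
  ext j
  simp [lowerProj_apply, j.isLt.trans_le hk]

theorem segPath_apply_eq_add (i : Fin n) (u : ℝ) (y : Fin n → ℝ) :
    segPath i u y = lowerProj i y + u • Pi.single i (y i) := rfl

theorem segPath_apply (i : Fin n) (u : ℝ) (y : Fin n → ℝ) (j : Fin n) :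
    segPath i u y j = if j < i then y j else if j = i then u * y i else 0 := by
  rcases lt_trichotomy j i with h | rfl | h
  · simp [segPath_apply_eq_add, lowerProj_apply, h, h.ne, Fin.lt_def.1 h]
  · simp [segPath_apply_eq_add, lowerProj_apply]
  · simp [segPath_apply_eq_add, lowerProj_apply, h.ne', not_lt.2 h.le]

theorem segPath_zero (i : Fin n) (y : Fin n → ℝ) : segPath i 0 y = lowerProj i y := by
  simp [segPath_apply_eq_add]

theorem segPath_one (i : Fin n) (y : Fin n → ℝ) : segPath i 1 y = lowerProj (i + 1) y := by
  ext j
  rw [segPath_apply, lowerProj_apply]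
  rcases lt_trichotomy j i with h | rfl | h
  · rw [if_pos h, if_pos (by omega)]
  · simp
  · rw [if_neg (not_lt.2 h.le), if_neg h.ne', if_neg (by omega)]

theorem segPath_single_of_lt {a i : Fin n} (h : a < i) (u : ℝ) :
    segPath i u (Pi.single a 1) = Pi.single a 1 := by
  ext j
  rcases lt_trichotomy j i with hj | rfl | hj
  · simp [segPath_apply, hj]
  · simp [segPath_apply, h.ne']
  · simp [segPath_apply, hj.ne', not_lt.2 hj.le, (h.trans hj).ne']

theorem segPath_single_self (i : Fin n) (u : ℝ) :
    segPath i u (Pi.single i 1) = u • Pi.single i 1 := by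
  ext j
  by_cases hj : j = i
  · subst hj; simp [segPath_apply]
  · simp [segPath_apply, hj]

theorem segPath_single_of_gt {a i : Fin n} (h : i < a) (u : ℝ) :
    segPath i u (Pi.single a 1) = 0 := by
  ext j
  rcases lt_trichotomy j i with hj | rfl | hj
  · simp [segPath_apply, hj, (hj.trans h).ne]
  · simp [segPath_apply, h.ne]
  · simp [segPath_apply, hj.ne', not_lt.2 hj.le]

theorem continuous_segPath (i : Fin n) : Continuous (segPath i) :=
  continuous_const.add (continuous_id.smul continuous_const)

theorem continuous_segPath_uncurry (i : Fin n) :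
    Continuous fun p : (Fin n → ℝ) × ℝ => segPath i p.2 p.1 :=
  ((continuous_segPath i).comp continuous_snd).clm_apply continuous_fst

theorem hasDerivAt_segPath (i : Fin n) (y : Fin n → ℝ) (u : ℝ) :
    HasDerivAt (fun u => segPath i u y) (Pi.single i (y i) : Fin n → ℝ) u := by
  simpa [segPath_apply_eq_add] using
    ((hasDerivAt_id u).smul_const (Pi.single i (y i) : Fin n → ℝ)).const_add (lowerProj i y)

def pathDomain (U : Set (Fin n → ℝ)) : Set (Fin n → ℝ) :=
  {y | ∀ i, ∀ u ∈ [[(0 : ℝ), 1]], segPath i u y ∈ U}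

theorem isOpen_pathDomain (hU : IsOpen U) : IsOpen (pathDomain U) := by
  refine isOpen_iff_eventually.2 fun y hy => eventually_all.2 fun i =>
    isCompact_uIcc.eventually_forall_of_forall_eventually fun u hu => ?_
  exact (continuous_segPath_uncurry i).continuousAt.eventually_mem (hU.mem_nhds (hy i u hu))

theorem orthant_subset_pathDomain (hU : {y | ∀ i, 0 ≤ y i} ⊆ U) :
    {y | ∀ i, 0 ≤ y i} ⊆ pathDomain U := by
  intro y hy i u hu
  rw [uIcc_of_le zero_le_one] at hu
  refine hU fun j => ?_
  rw [segPath_apply]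
  split_ifs
  exacts [hy j, mul_nonneg hu.1 (hy i), le_rfl]

theorem segPotential_eq_sum_integral (t : (Fin n → ℝ) → (Fin n → ℝ)) (y : Fin n → ℝ) :
    segPotential t y = ∑ i, ∫ u in (0 : ℝ)..1, y i * t (segPath i u y) i := by
  refine Finset.sum_congr rfl fun i _ => ?_
  simp only [intervalIntegral.integral_const_mul, funext (segPath_apply i _ y)]
  rw [← smul_eq_mul, smul_integral_comp_mul_right
    (fun s => t (fun j => if j < i then y j else if j = i then s else 0) i), zero_mul, one_mul]

noncomputable def segIntegrandFDeriv (g : (Fin n → ℝ) → ℝ) (i : Fin n) (y : Fin n → ℝ) (u : ℝ) :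
    (Fin n → ℝ) →L[ℝ] ℝ :=
  y i • (fderiv ℝ g (segPath i u y)).comp (segPath i u) + g (segPath i u y) • .proj i

theorem hasFDerivAt_segIntegrand (hU : IsOpen U) (hg : ContDiffOn ℝ 1 g U) {i : Fin n} {u : ℝ}
    {y : Fin n → ℝ} (hy : segPath i u y ∈ U) :
    HasFDerivAt (fun z => z i * g (segPath i u z)) (segIntegrandFDeriv g i y u) y := by
  have hg' := ((hg.contDiffAt (hU.mem_nhds hy)).differentiableAt one_ne_zero).hasFDerivAt
  exact (ContinuousLinearMap.proj i).hasFDerivAt.fun_mul (hg'.comp y (segPath i u).hasFDerivAt)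

theorem continuousOn_segIntegrandFDeriv (hU : IsOpen U) (hg : ContDiffOn ℝ 1 g U) (i : Fin n) :
    ContinuousOn (Function.uncurry (segIntegrandFDeriv g i)) (pathDomain U ×ˢ [[0, 1]]) := by
  have hmaps : MapsTo (fun p : (Fin n → ℝ) × ℝ => segPath i p.2 p.1)
      (pathDomain U ×ˢ [[0, 1]]) U := fun p hp => hp.1 i p.2 hp.2
  have hpath := (continuous_segPath_uncurry i).continuousOn (s := pathDomain U ×ˢ [[0, 1]])
  have hfderiv := (hg.continuousOn_fderiv_of_isOpen hU le_rfl).comp hpath hmaps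
  have hval := hg.continuousOn.comp hpath hmaps
  exact ((continuous_apply i).comp continuous_fst).continuousOn.smul
      (hfderiv.clm_comp ((continuous_segPath i).comp continuous_snd).continuousOn)
    |>.add (hval.smul continuousOn_const)

theorem hasFDerivAt_integral_segIntegrand (hU : IsOpen U) (hg : ContDiffOn ℝ 1 g U) (i : Fin n)
    {y : Fin n → ℝ} (hy : y ∈ pathDomain U) :
    HasFDerivAt (fun z => ∫ u in (0 : ℝ)..1, z i * g (segPath i u z))
      (∫ u in (0 : ℝ)..1, segIntegrandFDeriv g i y u) y := by
  refine hasFDerivAt_intervalIntegral_of_continuousOn (isOpen_pathDomain hU) hy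
    (fun z hz => ?_) (continuousOn_segIntegrandFDeriv hU hg i)
    fun z hz u hu => hasFDerivAt_segIntegrand hU hg (hz i u hu)
  exact continuousOn_const.mul <| hg.continuousOn.comp
    ((continuous_segPath i).clm_apply continuous_const).continuousOn fun u hu => hz i u hu

theorem hasFDerivAt_segPotential (hU : IsOpen U) (ht : ContDiffOn ℝ 1 t U) {y : Fin n → ℝ}
    (hy : y ∈ pathDomain U) :
    HasFDerivAt (segPotential t)
      (∑ i, ∫ u in (0 : ℝ)..1, segIntegrandFDeriv (fun z => t z i) i y u) y := by
  rw [funext (segPotential_eq_sum_integral t)]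
  exact HasFDerivAt.fun_sum fun i _ =>
    hasFDerivAt_integral_segIntegrand hU (contDiffOn_pi.1 ht i) i hy

def SymmetricJacobianOn (t : (Fin n → ℝ) → (Fin n → ℝ)) (U : Set (Fin n → ℝ)) : Prop :=
  ∀ x ∈ U, ∀ i j : Fin n,
    fderiv ℝ (fun y => t y i) x (Pi.single j 1) = fderiv ℝ (fun y => t y j) x (Pi.single i 1)

/-- The `a`-th partial derivative at `y` of the sum of the first `k` terms of `segPotential t`. -/
noncomputable def vertexValue (t : (Fin n → ℝ) → (Fin n → ℝ)) (a : Fin n) (y : Fin n → ℝ)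
    (k : ℕ) : ℝ :=
  if (a : ℕ) < k then t (lowerProj k y) a else 0

theorem vertexValue_of_lt {a : Fin n} {y : Fin n → ℝ} {k : ℕ} (h : (a : ℕ) < k) :
    vertexValue t a y k = t (lowerProj k y) a :=
  if_pos h

theorem vertexValue_of_le {a : Fin n} {y : Fin n → ℝ} {k : ℕ} (h : k ≤ a) :
    vertexValue t a y k = 0 :=
  if_neg h.not_gt

theorem single_eq_smul_single_one (i : Fin n) (c : ℝ) :
    (Pi.single i c : Fin n → ℝ) = c • Pi.single i 1 := by
  rw [← Pi.single_smul', smul_eq_mul, mul_one]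

theorem hasDerivAt_mul_segPath_self (hU : IsOpen U) (hg : ContDiffOn ℝ 1 g U) {i : Fin n} {u : ℝ}
    {y : Fin n → ℝ} (hy : segPath i u y ∈ U) :
    HasDerivAt (fun u => u * g (segPath i u y)) (segIntegrandFDeriv g i y u (Pi.single i 1)) u := by
  have hg' := ((hg.contDiffAt (hU.mem_nhds hy)).differentiableAt one_ne_zero).hasFDerivAt
  refine ((hasDerivAt_id u).fun_mul
    (hg'.comp_hasDerivAt u (hasDerivAt_segPath i y u))).congr_deriv ?_
  simp only [segIntegrandFDeriv, add_apply, smul_apply, ContinuousLinearMap.comp_apply,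
    segPath_single_self, single_eq_smul_single_one i (y i), map_smul,
    ContinuousLinearMap.proj_apply, Pi.single_eq_same, smul_eq_mul, id, Function.comp_apply]
  ring

theorem hasDerivAt_apply_segPath_of_lt (hU : IsOpen U) (ht : ContDiffOn ℝ 1 t U)
    (hsym : SymmetricJacobianOn t U)
    {a i : Fin n} (h : a < i) {u : ℝ} {y : Fin n → ℝ} (hy : segPath i u y ∈ U) :
    HasDerivAt (fun u => t (segPath i u y) a)
      (segIntegrandFDeriv (fun z => t z i) i y u (Pi.single a 1)) u := by
  have ht' := (((contDiffOn_pi.1 ht a).contDiffAt (hU.mem_nhds hy)).differentiableAt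
    one_ne_zero).hasFDerivAt
  refine (ht'.comp_hasDerivAt u (hasDerivAt_segPath i y u)).congr_deriv ?_
  simp only [segIntegrandFDeriv, add_apply, smul_apply,
    ContinuousLinearMap.comp_apply, segPath_single_of_lt h, ContinuousLinearMap.proj_apply,
    Pi.single_eq_of_ne h.ne', smul_zero, add_zero, hsym _ hy i a,
    single_eq_smul_single_one i (y i), map_smul]

theorem integral_segIntegrandFDeriv_apply_single (hU : IsOpen U) (ht : ContDiffOn ℝ 1 t U)
    (hsym : SymmetricJacobianOn t U) {y : Fin n → ℝ} (hy : y ∈ pathDomain U) (i a : Fin n) :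
    (∫ u in (0 : ℝ)..1, segIntegrandFDeriv (fun z => t z i) i y u) (Pi.single a 1) =
      vertexValue t a y (i + 1) - vertexValue t a y i := by
  have hcont : ContinuousOn (segIntegrandFDeriv (fun z => t z i) i y) [[0, 1]] :=
    (continuousOn_segIntegrandFDeriv hU (contDiffOn_pi.1 ht i) i).comp
      (Continuous.prodMk_right y).continuousOn fun u hu => ⟨hy, hu⟩
  have hint : IntervalIntegrable (fun u => segIntegrandFDeriv (fun z => t z i) i y u
      (Pi.single a 1)) volume 0 1 :=
    (hcont.clm_apply continuousOn_const).intervalIntegrable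
  rw [ContinuousLinearMap.intervalIntegral_apply hcont.intervalIntegrable]
  rcases lt_trichotomy i a with h | rfl | h
  · have hzero (u : ℝ) : segIntegrandFDeriv (fun z => t z i) i y u (Pi.single a 1) = 0 := by
      simp [segIntegrandFDeriv, segPath_single_of_gt h, h.ne]
    rw [funext hzero, intervalIntegral.integral_zero, vertexValue_of_le (by omega),
      vertexValue_of_le (by omega), sub_zero]
  · rw [integral_eq_sub_of_hasDerivAt
      (fun u hu => hasDerivAt_mul_segPath_self hU (contDiffOn_pi.1 ht i) (hy i u hu)) hint,
      vertexValue_of_lt (by omega), vertexValue_of_le le_rfl, segPath_one]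
    ring
  · rw [integral_eq_sub_of_hasDerivAt
      (fun u hu => hasDerivAt_apply_segPath_of_lt hU ht hsym h (hy i u hu)) hint,
      vertexValue_of_lt (by omega), vertexValue_of_lt (by omega), segPath_one, segPath_zero]

theorem fderiv_segPotential_apply_single (hU : IsOpen U) (ht : ContDiffOn ℝ 1 t U)
    (hsym : SymmetricJacobianOn t U) {y : Fin n → ℝ} (hy : y ∈ pathDomain U) (a : Fin n) :
    fderiv ℝ (segPotential t) y (Pi.single a 1) = t y a := by
  rw [(hasFDerivAt_segPotential hU ht hy).fderiv, sum_apply]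
  simp_rw [integral_segIntegrandFDeriv_apply_single hU ht hsym hy]
  rw [Fin.sum_univ_eq_sum_range (fun k => vertexValue t a y (k + 1) - vertexValue t a y k),
    Finset.sum_range_sub]
  simp [vertexValue, lowerProj_of_le le_rfl, a.isLt]

end SegmentedPath

open SegmentedPath in
theorem hessian_of_segmented_path_potential_general {n : ℕ}
    (t : (Fin n → ℝ) → (Fin n → ℝ)) (U : Set (Fin n → ℝ))
    (hU_open : IsOpen U)
    (hU_orthant : {x : Fin n → ℝ | ∀ i, 0 ≤ x i} ⊆ U)
    (ht : ContDiffOn ℝ 1 t U)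
    (hsym : ∀ x ∈ U, ∀ i j : Fin n,
      fderiv ℝ (fun y => t y i) x (Pi.single j 1) =
      fderiv ℝ (fun y => t y j) x (Pi.single i 1)) :
    ∀ x : Fin n → ℝ, (∀ i, 0 ≤ x i) →
      ∀ a b : Fin n,
        fderiv ℝ (fun y => fderiv ℝ (segPotential t) y (Pi.single a 1)) x (Pi.single b 1) =
        fderiv ℝ (fun y => t y a) x (Pi.single b 1) := by
  intro x hx a b
  have hgrad : (fun y => fderiv ℝ (segPotential t) y (Pi.single a 1)) =ᶠ[𝓝 x] fun y => t y a :=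
    eventuallyEq_of_mem
      ((isOpen_pathDomain hU_open).mem_nhds (orthant_subset_pathDomain hU_orthant hx))
      fun y hy => fderiv_segPotential_apply_single hU_open ht hsym hy a
  rw [hgrad.fderiv_eq]

/-- The Hessian of the segmented-path potential equals the Jacobian of `t`:
`(HF(x))_{ab} = ∂t_a/∂x_b (x)`. -/
theorem hessian_of_segmented_path_potential {n : ℕ}
    (t : (Fin n → ℝ) → (Fin n → ℝ)) (U : Set (Fin n → ℝ))
    (hU_open : IsOpen U) (hU_convex : Convex ℝ U)
    (hU_orthant : {x : Fin n → ℝ | ∀ i, 0 ≤ x i} ⊆ U)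
    (ht : ContDiffOn ℝ 1 t U)
    (hsym : ∀ x ∈ U, ∀ i j : Fin n,
      fderiv ℝ (fun y => t y i) x (Pi.single j 1) =
      fderiv ℝ (fun y => t y j) x (Pi.single i 1)) :
    ∀ x : Fin n → ℝ, (∀ i, 0 ≤ x i) →
      ∀ a b : Fin n,
        fderiv ℝ (fun y => fderiv ℝ (segPotential t) y (Pi.single a 1)) x (Pi.single b 1) =
        fderiv ℝ (fun y => t y a) x (Pi.single b 1) :=
  hessian_of_segmented_path_potential_general t U hU_open hU_orthant ht hsym
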